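/- Let g be even, g ≥ 2. For every nonnegative integer h, the set C = ⋃_{q≥0} {n ∈ ℤ : ℓ_g(n) = (2h+1)q} is an h-net in (ℤ, d_g); that is, ℤ = hA_g + C where hA_g is the h-fold sumset of A_g = {0} ∪ {±gⁱ : i ≥ 0}. -/

import Mathlib

open Pointwise

def Ag (g : ℤ) : Set ℤ := {0} ∪ {x | ∃ i : ℕ, x = g ^ i ∨ x = -g ^ i}

noncomputable def lg (g : ℤ) (n : ℤ) : ℕ :=
  sInf {h | ∃ l : List ℤ, (∀ a ∈ l, a ∈ Ag g) ∧ l.sum = n ∧ l.length = h}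

/-- The h-fold sumset hA = {a₁ + ⋯ + a_h : aᵢ ∈ A}. -/
def foldSum (h : ℕ) (A : Set ℤ) : Set ℤ :=
  {n | ∃ l : List ℤ, (∀ a ∈ l, a ∈ A) ∧ l.length = h ∧ l.sum = n}

/-!
For `N` large, `ℓ(n + gᴺ) = ℓ(n) + 1`. Indeed, write `n + gᴺ` as a sum of `k ≤ ℓ(n) + 1` signed
powers of `g`. Among `k + 1` disjoint windows of exponents of width `w` (with `gʷ > ℓ(n) + 2`),
placed between `log_g |n|` and `N`, one contains no exponent of the sum. Cutting the sum at that
window, the low terms add up to something congruent to `n` modulo a power `gᵀ` that dominates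
both, hence to `n` itself, and the high terms add up to `gᴺ ≠ 0`; so `k ≥ ℓ(n) + 1`.

Since also `ℓ` drops by one along a geodesic, `ℓ` takes on `x - hA_g` every value within `h` of
`ℓ(x)`, and one of these values is a multiple of `2h + 1`.
-/

theorem add_mem_foldSum_succ {A : Set ℤ} {a y : ℤ} {k : ℕ} (ha : a ∈ A) (hy : y ∈ foldSum k A) :
    a + y ∈ foldSum (k + 1) A := by
  obtain ⟨l, hl, hlen, rfl⟩ := hy
  refine ⟨a :: l, fun b hb => ?_, by simp [hlen], by simp⟩
  rcases List.mem_cons.mp hb with rfl | hb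
  exacts [ha, hl b hb]

theorem abs_sum_le_length_mul {R : Type*} [CommRing R] [LinearOrder R] [IsOrderedRing R]
    {l : List R} {B : R} (h : ∀ a ∈ l, |a| ≤ B) :
    |l.sum| ≤ l.length * B := by
  induction l with
  | nil => simp
  | cons a t ih =>
    have ha := h a List.mem_cons_self
    have ht := ih fun b hb => h b (List.mem_cons_of_mem a hb)
    calc |(a :: t).sum| ≤ |a| + |t.sum| := abs_add_le a t.sum
      _ ≤ B + t.length * B := add_le_add ha ht
      _ = (a :: t).length * B := by rw [List.length_cons]; push_cast; ring

theorem exists_free_window {α : Type*} (e : α → ℕ) (l : List α) (a₀ w : ℕ) :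
    ∃ j ≤ l.length, ∀ a ∈ l, e a < a₀ + j * w ∨ a₀ + (j + 1) * w ≤ e a := by
  classical
  obtain ⟨j, hj, hfree⟩ := Finset.exists_mem_notMem_of_card_lt_card
    (s := (l.map fun a => (e a - a₀) / w).toFinset) (t := Finset.range (l.length + 1))
    ((List.toFinset_card_le _).trans_lt (by simp))
  refine ⟨j, Nat.lt_succ_iff.mp (Finset.mem_range.mp hj), fun a ha => ?_⟩
  by_contra! hwin
  exact hfree (List.mem_toFinset.mpr (List.mem_map.mpr
    ⟨a, ha, Nat.div_eq_of_lt_le (by omega) (by omega)⟩))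

section WordLength

variable {g : ℤ}

theorem zero_mem_Ag : (0 : ℤ) ∈ Ag g := Or.inl rfl

theorem pow_mem_Ag (i : ℕ) : g ^ i ∈ Ag g := Or.inr ⟨i, Or.inl rfl⟩

theorem neg_pow_mem_Ag (i : ℕ) : -g ^ i ∈ Ag g := Or.inr ⟨i, Or.inr rfl⟩

theorem sign_mem_Ag (n : ℤ) : n.sign ∈ Ag g := by
  rcases Int.sign_trichotomy n with h | h | h <;> rw [h]
  · simpa using pow_mem_Ag (g := g) 0
  · exact zero_mem_Ag
  · simpa using neg_pow_mem_Ag (g := g) 0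

theorem lg_le_length {l : List ℤ} (hl : ∀ a ∈ l, a ∈ Ag g) : lg g l.sum ≤ l.length :=
  Nat.sInf_le ⟨l, hl, rfl, rfl⟩

theorem exists_list_length_eq_lg (n : ℤ) :
    ∃ l : List ℤ, (∀ a ∈ l, a ∈ Ag g) ∧ l.sum = n ∧ l.length = lg g n :=
  Nat.sInf_mem (s := {h | ∃ l : List ℤ, (∀ a ∈ l, a ∈ Ag g) ∧ l.sum = n ∧ l.length = h})
    ⟨_, List.replicate n.natAbs n.sign,
    fun a ha => List.eq_of_mem_replicate ha ▸ sign_mem_Ag n,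
    by rw [List.sum_replicate, nsmul_eq_mul, mul_comm, Int.sign_mul_natAbs], rfl⟩

theorem lg_le_one_of_mem {a : ℤ} (ha : a ∈ Ag g) : lg g a ≤ 1 := by
  simpa using lg_le_length (l := [a]) (by simpa using ha)

theorem lg_add_le (x y : ℤ) : lg g (x + y) ≤ lg g x + lg g y := by
  obtain ⟨l₁, hl₁, rfl, hlen₁⟩ := exists_list_length_eq_lg (g := g) x
  obtain ⟨l₂, hl₂, rfl, hlen₂⟩ := exists_list_length_eq_lg (g := g) y
  rw [← hlen₁, ← hlen₂, ← List.length_append, ← List.sum_append]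
  exact lg_le_length fun a ha => (List.mem_append.mp ha).elim (hl₁ a) (hl₂ a)

theorem exists_mem_Ag_lg_sub_eq_of_lg_eq_succ {x : ℤ} {k : ℕ} (hx : lg g x = k + 1) :
    ∃ a ∈ Ag g, lg g (x - a) = k := by
  obtain ⟨_ | ⟨a, t⟩, hl, hsum, hlen⟩ := exists_list_length_eq_lg (g := g) x
  · rw [List.length_nil] at hlen; omega
  have ha := hl a List.mem_cons_self
  have hle : lg g (x - a) ≤ t.length := by
    rw [← hsum, List.sum_cons, add_sub_cancel_left]
    exact lg_le_length fun b hb => hl b (List.mem_cons_of_mem a hb)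
  have hge : lg g x ≤ lg g (x - a) + 1 := by
    simpa using (lg_add_le (x - a) a).trans (Nat.add_le_add_left (lg_le_one_of_mem ha) _)
  rw [List.length_cons] at hlen
  exact ⟨a, ha, by omega⟩

theorem abs_lt_or_dvd_of_mem_Ag (hg : 2 ≤ g) {a : ℤ} (ha : a ∈ Ag g) {S T : ℕ}
    (h : Nat.log g.natAbs a.natAbs < S ∨ T ≤ Nat.log g.natAbs a.natAbs) :
    |a| < g ^ S ∨ g ^ T ∣ a := by
  rcases ha with rfl | ⟨i, rfl | rfl⟩
  · exact Or.inl (by positivity)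
  all_goals
    have hlog : Nat.log g.natAbs (g ^ i).natAbs = i := by
      rw [Int.natAbs_pow, Nat.log_pow (by omega)]
    have hg₀ : (0 : ℤ) ≤ g := by omega
    simp only [Int.natAbs_neg, hlog, abs_neg, abs_pow, abs_of_nonneg hg₀, dvd_neg] at h ⊢
    exact h.imp (pow_lt_pow_right₀ (by omega)) (pow_dvd_pow g)

theorem lg_lt_length_of_sum_eq {l : List ℤ} (hl : ∀ a ∈ l, a ∈ Ag g) {n z B D : ℤ}
    (hB : 0 ≤ B) (hcut : ∀ a ∈ l, |a| < B ∨ D ∣ a) (hsum : l.sum = n + z) (hz : z ≠ 0)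
    (hDz : D ∣ z) (hD : l.length * B + |n| < D) : lg g n < l.length := by
  classical
  set low := l.filter fun a => |a| < B
  set high := l.filter fun a => !decide (|a| < B)
  have hsplit : low.sum + high.sum = l.sum := by
    simpa only [List.map_id, decide_not] using
      List.sum_map_filter_add_sum_map_filter_not (fun a => |a| < B) id l
  have hlen : l.length = low.length + high.length := List.length_eq_length_filter_add _
  have hlow_abs : |low.sum| ≤ l.length * B := calc
    |low.sum| ≤ low.length * B :=
      abs_sum_le_length_mul fun a ha => (by simpa using (List.mem_filter.mp ha).2 : |a| < B).le
    _ ≤ l.length * B := by gcongr; omega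
  have hhigh : D ∣ high.sum := List.dvd_sum fun a ha => by
    have ⟨hal, hnot⟩ := List.mem_filter.mp ha
    exact (hcut a hal).resolve_left (by simpa using hnot)
  have hlow : low.sum = n := by
    have hdvd : D ∣ low.sum - n := by
      have : low.sum - n = z - high.sum := by linarith
      rw [this]; exact dvd_sub hDz hhigh
    have : |low.sum - n| < D := by linarith [abs_sub low.sum n]
    linarith [Int.eq_zero_of_abs_lt_dvd hdvd this]
  have hhigh_ne : high ≠ [] := by
    rintro h
    simp only [h, List.sum_nil, add_zero] at hsplit
    exact hz (by linarith)
  have hlow_len : lg g n ≤ low.length :=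
    hlow ▸ lg_le_length fun a ha => hl a (List.mem_filter.mp ha).1
  have hhigh_len : 0 < high.length := List.length_pos_iff.mpr hhigh_ne
  omega

theorem lg_add_pow_le (x : ℤ) (N : ℕ) : lg g (x + g ^ N) ≤ lg g x + 1 :=
  (lg_add_le x _).trans (Nat.add_le_add_left (lg_le_one_of_mem (pow_mem_Ag N)) _)

theorem lg_lt_lg_add_pow (hg : 2 ≤ g) {n : ℤ} {a₀ w : ℕ} (hn : |n| < g ^ a₀)
    (hw : (lg g n + 2 : ℤ) < g ^ w) : lg g n < lg g (n + g ^ (a₀ + (lg g n + 2) * w)) := by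
  set N := a₀ + (lg g n + 2) * w
  obtain ⟨l, hl, hsum, hlen⟩ := exists_list_length_eq_lg (g := g) (n + g ^ N)
  have hk : l.length ≤ lg g n + 1 := hlen ▸ lg_add_pow_le n N
  obtain ⟨j, hj, hfree⟩ := exists_free_window (fun a => Nat.log g.natAbs a.natAbs) l a₀ w
  set S := a₀ + j * w
  have hS : 0 < g ^ S := by positivity
  have hbound : l.length * g ^ S + |n| < g ^ (S + w) := calc
    l.length * g ^ S + |n| < (l.length + 1) * g ^ S := by
      linarith [pow_le_pow_right₀ (by omega : 1 ≤ g) (Nat.le_add_right a₀ (j * w))]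
    _ ≤ (lg g n + 2) * g ^ S := by
      gcongr ?_ * _; exact_mod_cast (by omega : l.length + 1 ≤ lg g n + 2)
    _ ≤ g ^ w * g ^ S := by gcongr
    _ = g ^ (S + w) := by ring
  rw [← hlen]
  refine lg_lt_length_of_sum_eq hl hS.le (fun a ha => abs_lt_or_dvd_of_mem_Ag hg (hl a ha) ?_)
    hsum (pow_ne_zero N (by omega)) (pow_dvd_pow g ?_) hbound
  · simpa [S, add_mul, add_assoc] using hfree a ha
  · have : j * w ≤ (lg g n + 1) * w := Nat.mul_le_mul_right w (hj.trans hk)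
    simp only [S, N]; nlinarith

theorem exists_lg_add_pow_eq (hg : 2 ≤ g) (n : ℤ) : ∃ N, lg g (n + g ^ N) = lg g n + 1 := by
  obtain ⟨a₀, ha₀⟩ := pow_unbounded_of_one_lt |n| (by omega : (1 : ℤ) < g)
  obtain ⟨w, hw⟩ := pow_unbounded_of_one_lt ((lg g n : ℤ) + 2) (by omega : (1 : ℤ) < g)
  exact ⟨_, le_antisymm (lg_add_pow_le n _) (lg_lt_lg_add_pow hg ha₀ hw)⟩

theorem exists_mem_Ag_lg_sub_eq (hg : 2 ≤ g) {x : ℤ} {t : ℕ} (ht : t ≤ lg g x + 1)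
    (ht' : lg g x ≤ t + 1) : ∃ a ∈ Ag g, lg g (x - a) = t := by
  rcases (by omega : t = lg g x + 1 ∨ t = lg g x ∨ lg g x = t + 1) with rfl | rfl | hx
  · obtain ⟨N, hN⟩ := exists_lg_add_pow_eq hg x
    exact ⟨-g ^ N, neg_pow_mem_Ag N, by rwa [sub_neg_eq_add]⟩
  · exact ⟨0, zero_mem_Ag, by rw [sub_zero]⟩
  · exact exists_mem_Ag_lg_sub_eq_of_lg_eq_succ hx

theorem exists_mem_foldSum_lg_sub_eq (hg : 2 ≤ g) (k : ℕ) {x : ℤ} {t : ℕ}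
    (ht : t ≤ lg g x + k) (ht' : lg g x ≤ t + k) : ∃ y ∈ foldSum k (Ag g), lg g (x - y) = t := by
  induction k generalizing x with
  | zero => exact ⟨0, ⟨[], by simp, rfl, rfl⟩, by rw [sub_zero]; omega⟩
  | succ k ih =>
    obtain ⟨a, ha, hxa⟩ := exists_mem_Ag_lg_sub_eq hg (x := x)
      (t := min (lg g x + 1) (max t (lg g x - 1))) (by omega) (by omega)
    obtain ⟨y, hy, hxy⟩ := ih (x := x - a) (by omega) (by omega)
    exact ⟨a + y, add_mem_foldSum_succ ha hy, by rwa [← sub_sub]⟩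

end WordLength

theorem stmt14_general (g : ℤ) (hg : 2 ≤ g) (h : ℕ) :
    foldSum h (Ag g) + (⋃ q : ℕ, {n : ℤ | lg g n = (2 * h + 1) * q}) = Set.univ := by
  refine Set.eq_univ_of_forall fun x => ?_
  have hdiv := Nat.div_add_mod (lg g x + h) (2 * h + 1)
  have hmod := Nat.mod_lt (lg g x + h) (by omega : 0 < 2 * h + 1)
  obtain ⟨y, hy, hxy⟩ := exists_mem_foldSum_lg_sub_eq hg h (x := x)
    (t := (2 * h + 1) * ((lg g x + h) / (2 * h + 1))) (by omega) (by omega)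
  exact Set.mem_add.mpr ⟨y, hy, x - y, Set.mem_iUnion.mpr ⟨_, hxy⟩, add_sub_cancel y x⟩

theorem stmt14 (g : ℤ) (hg : 2 ≤ g) (hge : Even g) (h : ℕ) :
    foldSum h (Ag g) + (⋃ q : ℕ, {n : ℤ | lg g n = (2 * h + 1) * q}) = Set.univ :=
  stmt14_general g hg h
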